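/- Let n ≥ 1, let k be a real number, and define g : ℝⁿ∖{0} → ℝⁿ by g(x) = x/‖x‖^k. Then g is differentiable on ℝⁿ∖{0} and for every x ≠ 0 its vector derivative in G_n is the scalar (∂g)(x) := ∑_{i=1}^{n} ι(e_i) · ι( (∂g/∂x_i)(x) ) = ((n−k)/‖x‖^k)·1, where (e_i) is the standard orthonormal basis of ℝⁿ, ∂g/∂x_i is the partial derivative of g in direction e_i, and the product is the product in G_n. -/

import Mathlib

/-!
The derivative of `x ↦ ‖x‖^(-k) • x` at `x ≠ 0` is `v ↦ ‖x‖^(-k) v - k ‖x‖^(-k-2) ⟪x, v⟫ x`.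
The vector derivative `∑ᵢ ι(eᵢ) ι(A eᵢ)` is linear in `A`; it sends the identity to `n`, since
`ι(eᵢ)² = 1`, and `v ↦ ⟪x, v⟫ y` to `ι(x) ι(y)`, by expanding `x` in the basis. Hence the vector
derivative is `n ‖x‖^(-k) - k ‖x‖^(-k-2) ι(x)² = (n - k) / ‖x‖^k`.
-/

noncomputable section

/-- The quadratic form `Q(v) = ‖v‖²` on Euclidean `n`-space. -/
def Qf (n : ℕ) : QuadraticForm ℝ (EuclideanSpace ℝ (Fin n)) :=
  LinearMap.BilinMap.toQuadraticMap (innerₗ (EuclideanSpace ℝ (Fin n)))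

/-- The geometric algebra `G_n` of Euclidean `n`-space. -/
abbrev G (n : ℕ) := CliffordAlgebra (Qf n)

section Calculus

variable {E : Type*} [NormedAddCommGroup E] [InnerProductSpace ℝ E]

theorem hasStrictFDerivAt_norm_rpow_of_ne_zero {x : E} (hx : x ≠ 0) (p : ℝ) :
    HasStrictFDerivAt (fun y : E ↦ ‖y‖ ^ p) ((p * ‖x‖ ^ (p - 2)) • innerSL ℝ x) x := by
  convert! (hasStrictFDerivAt_norm_sq x).rpow_const (p := p / 2) (by simp [hx]) using 0
  simp_rw [← Real.rpow_natCast_mul (norm_nonneg _), ← Nat.cast_smul_eq_nsmul ℝ, smul_smul]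
  ring_nf

theorem hasStrictFDerivAt_norm_rpow_smul_self {x : E} (hx : x ≠ 0) (p : ℝ) :
    HasStrictFDerivAt (fun y : E ↦ ‖y‖ ^ p • y)
      (‖x‖ ^ p • ContinuousLinearMap.id ℝ E +
        (p * ‖x‖ ^ (p - 2)) • (innerSL ℝ x).smulRight x) x := by
  convert (hasStrictFDerivAt_norm_rpow_of_ne_zero hx p).fun_smul (hasStrictFDerivAt_id x) using 1
  congr 1
  exact ContinuousLinearMap.ext fun v ↦ by simp [smul_smul]

end Calculus

section VectorDerivative

variable {ι E : Type*} [Fintype ι] [NormedAddCommGroup E] [InnerProductSpace ℝ E]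
  (Q : QuadraticForm ℝ E) (b : OrthonormalBasis ι ℝ E)

/-- The vector derivative `∂f(x) = ∑ᵢ ι(bᵢ) ι(∂f/∂bᵢ(x))` of a map `f` with `fderiv ℝ f x = A`. -/
def vectorDeriv (A : E →L[ℝ] E) : CliffordAlgebra Q :=
  ∑ i, CliffordAlgebra.ι Q (b i) * CliffordAlgebra.ι Q (A (b i))

theorem vectorDeriv_add (A B : E →L[ℝ] E) :
    vectorDeriv Q b (A + B) = vectorDeriv Q b A + vectorDeriv Q b B := by
  simp [vectorDeriv, mul_add, Finset.sum_add_distrib]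

theorem vectorDeriv_smul (c : ℝ) (A : E →L[ℝ] E) :
    vectorDeriv Q b (c • A) = c • vectorDeriv Q b A := by
  simp [vectorDeriv, Finset.smul_sum]

theorem vectorDeriv_smulRight_innerSL (x y : E) :
    vectorDeriv Q b ((innerSL ℝ x).smulRight y) =
      CliffordAlgebra.ι Q x * CliffordAlgebra.ι Q y := by
  simp_rw [vectorDeriv, ContinuousLinearMap.smulRight_apply, innerSL_apply_apply, map_smul,
    mul_smul_comm, ← smul_mul_assoc, ← Finset.sum_mul]
  conv_rhs => rw [← b.sum_repr' x]
  simp_rw [map_sum, map_smul, real_inner_comm]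

variable {Q}

theorem ι_mul_ι_self_of_eq_norm_sq (hQ : ∀ v, Q v = ‖v‖ ^ 2) (v : E) :
    CliffordAlgebra.ι Q v * CliffordAlgebra.ι Q v = algebraMap ℝ _ (‖v‖ ^ 2) := by
  rw [CliffordAlgebra.ι_sq_scalar, hQ]

theorem vectorDeriv_id_of_eq_norm_sq (hQ : ∀ v, Q v = ‖v‖ ^ 2) :
    vectorDeriv Q b (ContinuousLinearMap.id ℝ E) = algebraMap ℝ _ (Fintype.card ι) := by
  simp [vectorDeriv, ι_mul_ι_self_of_eq_norm_sq hQ, b.orthonormal.1]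

end VectorDerivative

theorem Qf_apply {n : ℕ} (v : EuclideanSpace ℝ (Fin n)) : Qf n v = ‖v‖ ^ 2 :=
  real_inner_self_eq_norm_sq v

theorem vector_derivative_x_div_norm_pow_general {n : ℕ} (k : ℝ)
    (g : EuclideanSpace ℝ (Fin n) → EuclideanSpace ℝ (Fin n))
    (hg : ∀ x, g x = (‖x‖ ^ k)⁻¹ • x) :
    DifferentiableOn ℝ g {x : EuclideanSpace ℝ (Fin n) | x ≠ 0} ∧
    ∀ x : EuclideanSpace ℝ (Fin n), x ≠ 0 →
      ∑ i : Fin n,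
        CliffordAlgebra.ι (Qf n) (EuclideanSpace.single i (1 : ℝ)) *
          CliffordAlgebra.ι (Qf n) (fderiv ℝ g x (EuclideanSpace.single i (1 : ℝ)))
        = algebraMap ℝ (G n) ((n - k) / ‖x‖ ^ k) := by
  obtain rfl : g = fun y ↦ ‖y‖ ^ (-k) • y := funext fun y ↦ by rw [hg, Real.rpow_neg (norm_nonneg y)]
  have hderiv (x : EuclideanSpace ℝ (Fin n)) (hx : x ≠ 0) :=
    (hasStrictFDerivAt_norm_rpow_smul_self hx (-k)).hasFDerivAt
  refine ⟨fun x hx ↦ (hderiv x hx).differentiableAt.differentiableWithinAt, fun x hx ↦ ?_⟩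
  have hx' : 0 < ‖x‖ := norm_pos_iff.mpr hx
  have hpow : ‖x‖ ^ (-k - 2) * ‖x‖ ^ 2 = ‖x‖ ^ (-k) := by
    rw [← Real.rpow_natCast, ← Real.rpow_add hx']
    norm_num
  calc _ = vectorDeriv (Qf n) (EuclideanSpace.basisFun (Fin n) ℝ)
        (fderiv ℝ (fun y ↦ ‖y‖ ^ (-k) • y) x) := by
        simp [vectorDeriv, EuclideanSpace.basisFun_apply]
    _ = algebraMap ℝ (G n) ((n - k) / ‖x‖ ^ k) := by
        rw [(hderiv x hx).fderiv, vectorDeriv_add, vectorDeriv_smul, vectorDeriv_smul,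
          vectorDeriv_id_of_eq_norm_sq _ Qf_apply, vectorDeriv_smulRight_innerSL,
          ι_mul_ι_self_of_eq_norm_sq Qf_apply, Algebra.smul_def, Algebra.smul_def, ← map_mul,
          ← map_mul, ← map_add, mul_assoc, hpow, Fintype.card_fin, Real.rpow_neg hx'.le]
        congr 1
        ring

/-- for `g(x) = x/‖x‖^k` (`k : ℝ`, `n ≥ 1`), `g` is differentiable away from `0`
and its vector derivative is the scalar `∂g(x) = ∑ᵢ ι(eᵢ)·ι(∂g/∂xᵢ(x)) = (n−k)/‖x‖^k`. -/
theorem vector_derivative_x_div_norm_pow {n : ℕ} (hn : 1 ≤ n) (k : ℝ)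
    (g : EuclideanSpace ℝ (Fin n) → EuclideanSpace ℝ (Fin n))
    (hg : ∀ x, g x = (‖x‖ ^ k)⁻¹ • x) :
    DifferentiableOn ℝ g {x : EuclideanSpace ℝ (Fin n) | x ≠ 0} ∧
    ∀ x : EuclideanSpace ℝ (Fin n), x ≠ 0 →
      ∑ i : Fin n,
        CliffordAlgebra.ι (Qf n) (EuclideanSpace.single i (1 : ℝ)) *
          CliffordAlgebra.ι (Qf n) (fderiv ℝ g x (EuclideanSpace.single i (1 : ℝ)))
        = algebraMap ℝ (G n) ((n - k) / ‖x‖ ^ k) :=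
  vector_derivative_x_div_norm_pow_general k g hg
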